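/- With the compact WY factorization W = I - U T⁻¹ Uᵀ where T = striu(UᵀU) + (1/2)diag(UᵀU) and U is built from nonzero Householder vectors as in the parametrisation, W is orthogonal: W Wᵀ = I. -/
import Mathlib


open Matrix

/-- `striu A + (1/2) diag A`: strictly upper triangular part plus half the diagonal. -/
noncomputable def wyT {m : ℕ} (A : Matrix (Fin m) (Fin m) ℝ) : Matrix (Fin m) (Fin m) ℝ :=
  Matrix.of fun i j => if (i : ℕ) < (j : ℕ) then A i j else if i = j then A i i / 2 else 0

/-- with `U` built from nonzero Householder vectors (`j`-th column
`u_{n-j+1}` zero-padded on top, `m ≤ n-1`) and `T = striu(UᵀU) + (1/2)diag(UᵀU)`, the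
matrix `W = I - U T⁻¹ Uᵀ` is orthogonal: `W Wᵀ = I`. -/
theorem compact_WY_orthogonal {n m : ℕ} (hm : m ≤ n - 1)
    (u : ℕ → (Fin n → ℝ))
    (hu : ∀ k, n - m + 1 ≤ k → k ≤ n →
      (u k ≠ 0 ∧ ∀ i : Fin n, (i : ℕ) < n - k → u k i = 0)) :
    ((1 : Matrix (Fin n) (Fin n) ℝ) -
        (Matrix.of fun (i : Fin n) (j : Fin m) => u (n - (j : ℕ)) i) *
          (wyT ((Matrix.of fun (i : Fin n) (j : Fin m) => u (n - (j : ℕ)) i).transpose *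
            (Matrix.of fun (i : Fin n) (j : Fin m) => u (n - (j : ℕ)) i)))⁻¹ *
          (Matrix.of fun (i : Fin n) (j : Fin m) => u (n - (j : ℕ)) i).transpose) *
      ((1 : Matrix (Fin n) (Fin n) ℝ) -
        (Matrix.of fun (i : Fin n) (j : Fin m) => u (n - (j : ℕ)) i) *
          (wyT ((Matrix.of fun (i : Fin n) (j : Fin m) => u (n - (j : ℕ)) i).transpose *
            (Matrix.of fun (i : Fin n) (j : Fin m) => u (n - (j : ℕ)) i)))⁻¹ *
          (Matrix.of fun (i : Fin n) (j : Fin m) => u (n - (j : ℕ)) i).transpose).transpose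
      = 1 := by
  set U : Matrix (Fin n) (Fin m) ℝ :=
    Matrix.of fun (i : Fin n) (j : Fin m) => u (n - (j : ℕ)) i with hU
  set T : Matrix (Fin m) (Fin m) ℝ := wyT (U.transpose * U) with hTdef
  have hdiag : ∀ j : Fin m, 0 < (U.transpose * U) j j := by
    intro j
    have hj1 : n - m + 1 ≤ n - (j : ℕ) := by omega
    have hj2 : n - (j : ℕ) ≤ n := by omega
    obtain ⟨hne, -⟩ := hu (n - (j : ℕ)) hj1 hj2
    obtain ⟨i, hi⟩ := Function.ne_iff.mp hne
    have h0 : (U.transpose * U) j j = ∑ i, (u (n - (j : ℕ)) i) ^ 2 := by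
      simp [Matrix.mul_apply, hU, sq]
    rw [h0]
    exact Finset.sum_pos' (fun k _ => sq_nonneg _)
      ⟨i, Finset.mem_univ _, by simpa using sq_pos_of_ne_zero hi⟩
  have htri : ∀ i j : Fin m, j < i → T i j = 0 := by
    intro i j h
    have h1 : ¬ ((i : ℕ) < (j : ℕ)) := by
      have := Fin.lt_def.mp h; omega
    have h2 : i ≠ j := Ne.symm (Fin.ne_of_lt h)
    simp only [hTdef, wyT, Matrix.of_apply, if_neg h1, if_neg h2]
  have hTd : ∀ j : Fin m, T j j = (U.transpose * U) j j / 2 := by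
    intro j; simp [hTdef, wyT]
  have hdet : IsUnit T.det := by
    rw [Matrix.det_of_upperTriangular htri]
    refine (Finset.prod_ne_zero_iff.mpr fun j _ => ?_).isUnit
    rw [hTd j]
    have := hdiag j
    positivity
  have hdetT : IsUnit T.transpose.det := by rwa [Matrix.det_transpose]
  have hTT' : T⁻¹ * T = 1 := Matrix.nonsing_inv_mul _ hdet
  have hTT2 : T.transpose * T.transpose⁻¹ = 1 := Matrix.mul_nonsing_inv _ hdetT
  have hsum : T + T.transpose = U.transpose * U := by
    ext i j
    have hsym : (U.transpose * U) j i = (U.transpose * U) i j := by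
      simp [Matrix.mul_apply, mul_comm]
    simp only [Matrix.add_apply, Matrix.transpose_apply, hTdef, wyT, Matrix.of_apply]
    rcases lt_trichotomy (i : ℕ) (j : ℕ) with h | h | h
    · have h1 : ¬ ((j : ℕ) < (i : ℕ)) := by omega
      have h2 : i ≠ j := by rintro rfl; omega
      have h3 : j ≠ i := by rintro rfl; omega
      rw [if_pos h, if_neg h1, if_neg h3]
      ring
    · have h2 : i = j := Fin.ext h
      subst h2
      rw [if_neg (lt_irrefl _), if_pos rfl]
      ring
    · have h1 : ¬ ((i : ℕ) < (j : ℕ)) := by omega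
      have h2 : i ≠ j := by rintro rfl; omega
      rw [if_neg h1, if_pos h, if_neg h2, hsym]
      ring
  have key : T⁻¹ * (U.transpose * U) * (T⁻¹).transpose = (T⁻¹).transpose + T⁻¹ := by
    rw [← hsum, Matrix.transpose_nonsing_inv, Matrix.mul_add, hTT', Matrix.add_mul,
      Matrix.one_mul, Matrix.mul_assoc, hTT2, Matrix.mul_one]
  have expand : U * (T⁻¹ * (U.transpose * (U * ((T⁻¹).transpose * U.transpose))))
      = U * ((T⁻¹).transpose * U.transpose) + U * (T⁻¹ * U.transpose) := by
    have h1 : U * (T⁻¹ * (U.transpose * (U * ((T⁻¹).transpose * U.transpose))))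
        = U * ((T⁻¹ * (U.transpose * U) * (T⁻¹).transpose) * U.transpose) := by
      simp only [Matrix.mul_assoc]
    rw [h1, key, Matrix.add_mul, Matrix.mul_add]
  simp only [Matrix.transpose_sub, Matrix.transpose_one, Matrix.transpose_mul,
    Matrix.transpose_transpose, Matrix.sub_mul, Matrix.mul_sub, Matrix.mul_one,
    Matrix.one_mul, Matrix.mul_assoc]
  rw [expand]
  abel
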